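/- Let B ≥ 1, n ≥ 1 and k be integers, and let (p,q) ∈ Rat_B satisfy the C_n^k symmetry, i.e. the (α,β)-symmetry with α = 2π/n and β = 2πk/n. Then n divides B(B − k). -/

import Mathlib

open Polynomial Complex
open scoped Real

/-!
Write `ω = e^{iα}`. The symmetry says that the reduced fraction `p(ω·)/q(ω·)` equals
`(cos(β/2) p + i sin(β/2) q)/(i sin(β/2) p + cos(β/2) q)`, whose numerator has degree at most `B`;
hence the two pairs differ by a scalar `μ`. At `z = 0` this makes `(p(0), q(0)) ≠ 0` an eigenvector
of the matrix of `M_β`, so `μ = e^{± iβ/2}`, while the leading coefficients give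
`e^{iβ/2} = μ ω^B`. Thus `ω^B = 1` or `ω^B = e^{iβ} = ω^k`, and as `ω` is a primitive `n`-th root
of unity, `n ∣ B` or `n ∣ B - k`.
-/

/-- `(p,q)` has the `(α,β)`-symmetry: `R(e^{iα} z) = M_β(R(z))` for `R = p/q`, where
`M_β` is the Möbius rotation by `β` about the `X`-axis. -/
def RotSymm (α β : ℝ) (p q : Polynomial ℂ) : Prop :=
  ∀ z : ℂ,
    p.eval (exp (I * α) * z) *
        (I * Real.sin (β / 2) * p.eval z + (Real.cos (β / 2) : ℂ) * q.eval z) =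
      q.eval (exp (I * α) * z) *
        ((Real.cos (β / 2) : ℂ) * p.eval z + I * Real.sin (β / 2) * q.eval z)

namespace Polynomial

variable {K : Type*} [Field K]

theorem exists_eq_C_mul_of_dvd_of_natDegree_le {P a : K[X]} (hP : P ≠ 0) (hdvd : P ∣ a)
    (ha : a.natDegree ≤ P.natDegree) : ∃ μ : K, a = C μ * P := by
  obtain ⟨u, rfl⟩ := hdvd
  rcases eq_or_ne u 0 with rfl | hu
  · exact ⟨0, by simp⟩
  · rw [natDegree_mul hP hu] at ha
    exact ⟨u.coeff 0, by rw [mul_comm, ← eq_C_of_natDegree_eq_zero (by omega)]⟩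

theorem exists_eq_C_mul_of_isCoprime_of_mul_eq {P Q a b : K[X]} (hcop : IsCoprime P Q)
    (hP : P ≠ 0) (h : P * b = Q * a) (ha : a.natDegree ≤ P.natDegree) :
    ∃ μ : K, a = C μ * P ∧ b = C μ * Q := by
  obtain ⟨μ, rfl⟩ := exists_eq_C_mul_of_dvd_of_natDegree_le hP
    (hcop.dvd_of_dvd_mul_left ⟨b, h.symm⟩) ha
  refine ⟨μ, rfl, mul_left_cancel₀ hP ?_⟩
  rw [h]
  ring

end Polynomial

/-- `[[cos θ, i sin θ], [i sin θ, cos θ]]` is the matrix of `M_{2θ}`. -/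
theorem Complex.eq_exp_or_eq_exp_neg_of_eigenvector (θ : ℂ) {x y μ : ℂ} (hxy : ¬(x = 0 ∧ y = 0))
    (h₁ : cos θ * x + I * sin θ * y = μ * x) (h₂ : I * sin θ * x + cos θ * y = μ * y) :
    μ = exp (θ * I) ∨ μ = exp (-θ * I) := by
  have hchar : (μ - exp (θ * I)) * (μ - exp (-θ * I)) = (cos θ - μ) ^ 2 + sin θ ^ 2 := by
    rw [exp_mul_I, exp_mul_I, cos_neg, sin_neg]
    linear_combination (-sin θ ^ 2) * I_sq
  have hx : ((cos θ - μ) ^ 2 + sin θ ^ 2) * x = 0 := by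
    linear_combination (cos θ - μ) * h₁ - I * sin θ * h₂ + sin θ ^ 2 * x * I_sq
  have hy : ((cos θ - μ) ^ 2 + sin θ ^ 2) * y = 0 := by
    linear_combination (cos θ - μ) * h₂ - I * sin θ * h₁ + sin θ ^ 2 * y * I_sq
  have hdet : (μ - exp (θ * I)) * (μ - exp (-θ * I)) = 0 := by
    rw [hchar]
    by_contra hne
    exact hxy ⟨(mul_eq_zero.mp hx).resolve_left hne, (mul_eq_zero.mp hy).resolve_left hne⟩
  simpa only [sub_eq_zero] using mul_eq_zero.mp hdet

namespace RotSymm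

variable {α β : ℝ} {p q : ℂ[X]}

theorem comp_mul_eq (hsym : RotSymm α β p q) :
    p.comp (C (exp (I * α)) * X) * (C (I * sin (β / 2)) * p + C (cos (β / 2)) * q) =
      q.comp (C (exp (I * α)) * X) * (C (cos (β / 2)) * p + C (I * sin (β / 2)) * q) := by
  refine Polynomial.funext fun z => ?_
  simpa [ofReal_cos, ofReal_sin] using hsym z

theorem exp_pow_eq_one_or_eq_exp {B : ℕ} (hsym : RotSymm α β p q) (hpm : p.Monic)
    (hpd : p.natDegree = B) (hqm : q.Monic) (hqd : q.natDegree = B)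
    (hnoroot : ∀ z : ℂ, ¬(p.eval z = 0 ∧ q.eval z = 0)) :
    exp (I * α) ^ B = 1 ∨ exp (I * α) ^ B = exp (I * β) := by
  set ω := exp (I * α)
  set θ : ℂ := β / 2
  have hcop : IsCoprime (p.comp (C ω * X)) (q.comp (C ω * X)) := by
    refine IsCoprime.map ?_ (compRingHom (C ω * X))
    exact (isCoprime_iff_aeval_ne_zero_of_isAlgClosed ℂ ℂ p q).2 fun z =>
      not_and_or.1 (by simpa using hnoroot z)
  have hP0 : p.comp (C ω * X) ≠ 0 :=
    (comp_C_mul_X_eq_zero_iff (mem_nonZeroDivisors_of_ne_zero (exp_ne_zero _))).not.2 hpm.ne_zero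
  have hdeg : (C (cos θ) * p + C (I * sin θ) * q).natDegree ≤ (p.comp (C ω * X)).natDegree := by
    rw [natDegree_comp, natDegree_C_mul_X _ (exp_ne_zero _), mul_one, hpd]
    exact natDegree_add_le_of_degree_le (natDegree_C_mul_le _ _ |>.trans hpd.le)
      (natDegree_C_mul_le _ _ |>.trans hqd.le)
  obtain ⟨μ, ha, hb⟩ :=
    exists_eq_C_mul_of_isCoprime_of_mul_eq hcop hP0 hsym.comp_mul_eq hdeg
  have hlead : exp (θ * I) = μ * ω ^ B := by
    have := congrArg (coeff · B) ha
    simp only [coeff_add, coeff_C_mul, comp_C_mul_X_coeff, hpd ▸ hpm.coeff_natDegree,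
      hqd ▸ hqm.coeff_natDegree] at this
    rw [exp_mul_I]
    linear_combination this
  have heig := eq_exp_or_eq_exp_neg_of_eigenvector θ (hnoroot 0)
    (by simpa using congrArg (eval 0) ha) (by simpa using congrArg (eval 0) hb)
  rcases heig with rfl | rfl
  · exact .inl (mul_left_cancel₀ (exp_ne_zero _) (by rw [mul_one]; exact hlead.symm))
  · have hinv : exp (θ * I) * exp (-θ * I) = 1 := by rw [← exp_add]; simp
    right
    rw [show I * β = θ * I + θ * I by simp only [θ]; ring, exp_add]
    linear_combination -exp (θ * I) * hlead - ω ^ B * hinv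

end RotSymm

theorem cyclic_symmetry_divisibility_general (B n : ℕ) (k : ℤ) (hn : 1 ≤ n)
    (p q : Polynomial ℂ)
    (hpm : p.Monic) (hpd : p.natDegree = B) (hqm : q.Monic) (hqd : q.natDegree = B)
    (hnoroot : ∀ z : ℂ, ¬(p.eval z = 0 ∧ q.eval z = 0))
    (hsym : RotSymm (2 * π / n) (2 * π * k / n) p q) :
    (n : ℤ) ∣ (B : ℤ) * ((B : ℤ) - k) := by
  have hζ := isPrimitiveRoot_exp n (by omega)
  have hα : exp (I * ↑(2 * π / n)) = exp (2 * π * I / n) := by push_cast; ring_nf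
  have hβ : exp (I * ↑(2 * π * k / n)) = exp (2 * π * I / n) ^ k := by
    rw [← exp_int_mul]; push_cast; ring_nf
  rcases hsym.exp_pow_eq_one_or_eq_exp hpm hpd hqm hqd hnoroot with h | h
  · rw [hα, hζ.pow_eq_one_iff_dvd] at h
    exact dvd_mul_of_dvd_left (Int.natCast_dvd_natCast.2 h) _
  · rw [hα, hβ, ← zpow_natCast, ← div_eq_one_iff_eq (zpow_ne_zero _ (exp_ne_zero _)),
      ← zpow_sub₀ (exp_ne_zero _), hζ.zpow_eq_one_iff_dvd] at h
    exact dvd_mul_of_dvd_right h _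

/-- If `(p,q) ∈ Rat_B` has the `C_n^k` symmetry, i.e. the
`(α,β)`-symmetry with `α = 2π/n` and `β = 2πk/n`, then `n` divides `B(B - k)`. -/
theorem cyclic_symmetry_divisibility (B n : ℕ) (k : ℤ) (hB : 1 ≤ B) (hn : 1 ≤ n)
    (p q : Polynomial ℂ)
    (hpm : p.Monic) (hpd : p.natDegree = B) (hqm : q.Monic) (hqd : q.natDegree = B)
    (hnoroot : ∀ z : ℂ, ¬(p.eval z = 0 ∧ q.eval z = 0))
    (hsym : RotSymm (2 * π / n) (2 * π * k / n) p q) :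
    (n : ℤ) ∣ (B : ℤ) * ((B : ℤ) - k) :=
  cyclic_symmetry_divisibility_general B n k hn p q hpm hpd hqm hqd hnoroot hsym
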